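/- arXiv:2401.11563 — 3 statements merged into one kernel-verified Lean document; each statement's English description precedes it below -/
import Mathlib

section
/- Let V be a symmetric positive definite real d×d matrix, θ̂ ∈ ℝ^d, β ≥ 0, and B := {θ ∈ ℝ^d : ‖θ̂ − θ‖_V ≤ β}. Let α, r_b ∈ ℝ and let φ, ψ ∈ ℝ^d with ‖φ‖₂ ≤ 1. If ψᵀθ̂ ≥ β/√(λ_min(V)) + (1 − α)·r_b and φᵀθ̂ ≥ ψᵀθ̂, then for every v ∈ B one has φᵀv ≥ (1 − α)·r_b. -/
open Matrix

open scoped Classical in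
/-- smallest eigenvalue of a real matrix (junk value 0 if not Hermitian) -/
noncomputable def lamMin {d : ℕ} (V : Matrix (Fin d) (Fin d) ℝ) : ℝ :=
  if h : V.IsHermitian then ⨅ i, h.eigenvalues i else 0

open scoped Classical in
/-- largest eigenvalue of a real matrix (junk value 0 if not Hermitian) -/
noncomputable def lamMax {d : ℕ} (V : Matrix (Fin d) (Fin d) ℝ) : ℝ :=
  if h : V.IsHermitian then ⨆ i, h.eigenvalues i else 0

/-- weighted norm ‖z‖_V = √(zᵀ V z) -/
noncomputable def wnorm {d : ℕ} (V : Matrix (Fin d) (Fin d) ℝ) (z : Fin d → ℝ) : ℝ :=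
  Real.sqrt (z ⬝ᵥ V.mulVec z)

/-- Euclidean norm of a vector in ℝ^d -/
noncomputable def eucNorm {d : ℕ} (z : Fin d → ℝ) : ℝ :=
  Real.sqrt (z ⬝ᵥ z)


/-!
The Rayleigh bound `λ_min(V) ‖z‖₂² ≤ zᵀ V z` turns `‖θ̂ - v‖_V ≤ β` into
`‖θ̂ - v‖₂ ≤ β / √λ_min(V)`. Cauchy–Schwarz with `‖φ‖₂ ≤ 1` then gives
`φᵀ v ≥ φᵀ θ̂ - β / √λ_min(V) ≥ ψᵀ θ̂ - β / √λ_min(V)`.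
-/

section

variable {d : ℕ} {V : Matrix (Fin d) (Fin d) ℝ}

open scoped MatrixOrder in
lemma algebraMap_lamMin_le (hV : V.IsHermitian) : algebraMap ℝ _ (lamMin V) ≤ V := by
  refine algebraMap_le_of_le_spectrum (fun x hx => ?_) hV.isSelfAdjoint
  rw [hV.spectrum_real_eq_range_eigenvalues] at hx
  obtain ⟨i, rfl⟩ := hx
  rw [lamMin, dif_pos hV]
  exact ciInf_le (Finite.bddBelow_range _) i

open scoped MatrixOrder in
lemma lamMin_mul_dotProduct_self_le (hV : V.IsHermitian) (z : Fin d → ℝ) :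
    lamMin V * (z ⬝ᵥ z) ≤ z ⬝ᵥ V *ᵥ z := by
  have h := (Matrix.le_iff.mp (algebraMap_lamMin_le hV)).dotProduct_mulVec_nonneg z
  simp only [star_trivial, sub_mulVec, dotProduct_sub, Algebra.algebraMap_eq_smul_one,
    smul_mulVec, one_mulVec, dotProduct_smul, smul_eq_mul] at h
  linarith

lemma sqrt_lamMin_mul_eucNorm_le_wnorm (hV : V.IsHermitian) (z : Fin d → ℝ) :
    Real.sqrt (lamMin V) * eucNorm z ≤ wnorm V z := by
  rw [eucNorm, wnorm, ← Real.sqrt_mul' _ (by simpa using dotProduct_self_star_nonneg z)]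
  exact Real.sqrt_le_sqrt (lamMin_mul_dotProduct_self_le hV z)

lemma lamMin_pos [Nonempty (Fin d)] (hV : V.PosDef) : 0 < lamMin V := by
  obtain ⟨i, hi⟩ := exists_eq_ciInf_of_finite (f := hV.1.eigenvalues)
  rw [lamMin, dif_pos hV.1, ← hi]
  exact hV.eigenvalues_pos i

lemma eucNorm_le_div_sqrt_lamMin_of_wnorm_le (hV : V.PosDef) {z : Fin d → ℝ} {β : ℝ}
    (hz : wnorm V z ≤ β) : eucNorm z ≤ β / Real.sqrt (lamMin V) := by
  rcases isEmpty_or_nonempty (Fin d) with hd | hd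
  · have hβ : 0 ≤ β := (Real.sqrt_nonneg _).trans hz
    simp [eucNorm, Subsingleton.elim z 0, div_nonneg hβ (Real.sqrt_nonneg _)]
  · rw [le_div_iff₀' (Real.sqrt_pos.2 (lamMin_pos hV))]
    exact (sqrt_lamMin_mul_eucNorm_le_wnorm hV.1 z).trans hz

end

lemma dotProduct_le_eucNorm_mul_eucNorm {d : ℕ} (x y : Fin d → ℝ) :
    x ⬝ᵥ y ≤ eucNorm x * eucNorm y := by
  simpa [dotProduct, eucNorm, pow_two] using Real.sum_mul_le_sqrt_mul_sqrt Finset.univ x y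

theorem stmt2_general {d : ℕ} (V : Matrix (Fin d) (Fin d) ℝ) (hV : V.PosDef)
    (θhat : Fin d → ℝ) (β : ℝ)
    (B : Set (Fin d → ℝ)) (hB : B = {θ : Fin d → ℝ | wnorm V (θhat - θ) ≤ β})
    (α rb : ℝ) (φ ψ : Fin d → ℝ) (hφ : eucNorm φ ≤ 1)
    (h1 : ψ ⬝ᵥ θhat ≥ β / Real.sqrt (lamMin V) + (1 - α) * rb)
    (h2 : φ ⬝ᵥ θhat ≥ ψ ⬝ᵥ θhat) :
    ∀ v ∈ B, φ ⬝ᵥ v ≥ (1 - α) * rb := by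
  intro v hv
  rw [hB] at hv
  have hdev : φ ⬝ᵥ (θhat - v) ≤ β / Real.sqrt (lamMin V) :=
    calc φ ⬝ᵥ (θhat - v) ≤ eucNorm φ * eucNorm (θhat - v) :=
          dotProduct_le_eucNorm_mul_eucNorm _ _
      _ ≤ 1 * (β / Real.sqrt (lamMin V)) :=
          mul_le_mul hφ (eucNorm_le_div_sqrt_lamMin_of_wnorm_le hV hv) (Real.sqrt_nonneg _)
            zero_le_one
      _ = β / Real.sqrt (lamMin V) := one_mul _
  rw [dotProduct_sub] at hdev
  linarith

theorem stmt2 {d : ℕ} (V : Matrix (Fin d) (Fin d) ℝ) (hV : V.PosDef)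
    (θhat : Fin d → ℝ) (β : ℝ) (hβ : 0 ≤ β)
    (B : Set (Fin d → ℝ)) (hB : B = {θ : Fin d → ℝ | wnorm V (θhat - θ) ≤ β})
    (α rb : ℝ) (φ ψ : Fin d → ℝ) (hφ : eucNorm φ ≤ 1)
    (h1 : ψ ⬝ᵥ θhat ≥ β / Real.sqrt (lamMin V) + (1 - α) * rb)
    (h2 : φ ⬝ᵥ θhat ≥ ψ ⬝ᵥ θhat) :
    ∀ v ∈ B, φ ⬝ᵥ v ≥ (1 - α) * rb :=
  stmt2_general V hV θhat β B hB α rb φ ψ hφ h1 h2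
end

section
/- Let α ∈ [0,1], 0 < r_l ≤ r_b ≤ r_h, and let φ_b, ζ, θ* ∈ ℝ^d satisfy φ_bᵀθ* = r_b, ‖ζ‖₂ = 1 and ‖θ*‖₂ ≤ 1. Then for every ρ with 0 < ρ ≤ α·r_l/(1 + r_h), the conservative feature vector (1 − ρ)·φ_b + ρ·ζ satisfies ((1 − ρ)·φ_b + ρ·ζ)ᵀθ* ≥ (1 − α)·r_b. -/
open Matrix

/-! The performance loss of mixing in `ζ` is at most `ρ (r_b + 1) ≤ ρ (1 + r_h) ≤ α r_l ≤ α r_b`,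
since by Cauchy–Schwarz the exploration direction loses at most `‖ζ‖ ‖θ*‖ ≤ 1` reward. -/

theorem eucNorm_eq_norm_toLp {d : ℕ} (z : Fin d → ℝ) :
    eucNorm z = ‖WithLp.toLp 2 z‖ := by
  rw [norm_eq_sqrt_real_inner, EuclideanSpace.inner_toLp_toLp, star_trivial, eucNorm]

theorem abs_dotProduct_le_eucNorm_mul {d : ℕ} (x y : Fin d → ℝ) :
    |x ⬝ᵥ y| ≤ eucNorm x * eucNorm y := by
  rw [eucNorm_eq_norm_toLp, eucNorm_eq_norm_toLp, dotProduct_comm,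
    ← star_trivial x, ← EuclideanSpace.inner_toLp_toLp]
  exact abs_real_inner_le_norm _ _

theorem neg_one_le_dotProduct {d : ℕ} {x y : Fin d → ℝ} (hx : eucNorm x ≤ 1)
    (hy : eucNorm y ≤ 1) : -1 ≤ x ⬝ᵥ y := by
  have hmul : eucNorm x * eucNorm y ≤ 1 :=
    mul_le_one₀ hx (Real.sqrt_nonneg _) hy
  linarith [neg_abs_le (x ⬝ᵥ y), abs_dotProduct_le_eucNorm_mul x y]

theorem mix_dotProduct_ge {d : ℕ} {φ ζ θ : Fin d → ℝ} {α ρ : ℝ} (hρ0 : 0 ≤ ρ)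
    (hζθ : -1 ≤ ζ ⬝ᵥ θ) (hρ : ρ * (φ ⬝ᵥ θ + 1) ≤ α * (φ ⬝ᵥ θ)) :
    (1 - α) * (φ ⬝ᵥ θ) ≤ ((1 - ρ) • φ + ρ • ζ) ⬝ᵥ θ := by
  rw [add_dotProduct, smul_dotProduct, smul_dotProduct, smul_eq_mul, smul_eq_mul]
  nlinarith

theorem stmt5_general {d : ℕ} (α rl rb rh : ℝ) (hα0 : 0 ≤ α)
    (hrl : 0 < rl) (hlb : rl ≤ rb) (hub : rb ≤ rh)
    (φb ζ θstar : Fin d → ℝ)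
    (hb : φb ⬝ᵥ θstar = rb) (hζ : eucNorm ζ = 1) (hθ : eucNorm θstar ≤ 1)
    (ρ : ℝ) (hρ0 : 0 < ρ) (hρ : ρ ≤ α * rl / (1 + rh)) :
    ((1 - ρ) • φb + ρ • ζ) ⬝ᵥ θstar ≥ (1 - α) * rb := by
  have hρ' : ρ * (1 + rh) ≤ α * rl := (le_div_iff₀ (by linarith)).mp hρ
  have hloss : ρ * (φb ⬝ᵥ θstar + 1) ≤ α * (φb ⬝ᵥ θstar) := by
    rw [hb]
    calc ρ * (rb + 1) ≤ ρ * (1 + rh) := mul_le_mul_of_nonneg_left (by linarith) hρ0.le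
      _ ≤ α * rl := hρ'
      _ ≤ α * rb := by gcongr
  rw [ge_iff_le, ← hb]
  exact mix_dotProduct_ge hρ0.le (neg_one_le_dotProduct hζ.le hθ) hloss

theorem stmt5 {d : ℕ} (α rl rb rh : ℝ) (hα0 : 0 ≤ α) (hα1 : α ≤ 1)
    (hrl : 0 < rl) (hlb : rl ≤ rb) (hub : rb ≤ rh)
    (φb ζ θstar : Fin d → ℝ)
    (hb : φb ⬝ᵥ θstar = rb) (hζ : eucNorm ζ = 1) (hθ : eucNorm θstar ≤ 1)
    (ρ : ℝ) (hρ0 : 0 < ρ) (hρ : ρ ≤ α * rl / (1 + rh)) :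
    ((1 - ρ) • φb + ρ • ζ) ⬝ᵥ θstar ≥ (1 - α) * rb :=
  stmt5_general α rl rb rh hα0 hrl hlb hub φb ζ θstar hb hζ hθ ρ hρ0 hρ
end

section
/- Let M ≥ 1 be an integer, ρ ∈ (0,1), d ≥ 1 an integer, δ ∈ (0,1), and set L := log(d/δ) > 0. Let σ ≥ 0, λ > 0, α ∈ (0,1], r_l > 0, T ≥ 0, and define β₀ := σ·√(2·log(1/δ)) + √λ and C := (2β₀/(α r_l))² − (λ + M·T); assume C ≥ 0. If N ≥ 0 satisfies 2Mρ(1 − ρ)·N + C ≤ √(32·M·ρ²(1 − ρ)²·N·L), then N ≥ (4/M)·L − C/(2Mρ(1 − ρ)) − √((16/M²)·L² − 4·C·L/(M²ρ(1 − ρ))) and N ≤ √((96/M²)·L² − 16·C·L/(M²ρ(1 − ρ))). -/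
/-!
Squaring the hypothesis and dividing by `a² = (2Mρ(1-ρ))²` turns it into the quadratic
inequality `(N + c)² ≤ 2uN` with `u = 4L/M` and `c = C/a`, i.e. `(N - (u - c))² ≤ u² - 2uc`.
So `N` lies within `√(u² - 2uc)` of `u - c`, which is the lower bound. Nonnegativity of the
discriminant gives `c ≤ u/2`, whence `N ≤ 2(u - c)` and `N² ≤ 4(u - c)² ≤ 6u² - 8uc`.
-/

namespace Real

lemma sq_add_div_le_of_le_sqrt {a C x v : ℝ} (ha : 0 < a) (hC : 0 ≤ C) (hx : 0 ≤ x)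
    (hv : 0 ≤ v) (h : a * x + C ≤ √(a ^ 2 * v)) : (x + C / a) ^ 2 ≤ v := by
  have hsq : (a * x + C) ^ 2 ≤ a ^ 2 * v :=
    (le_sqrt (by positivity) (by positivity)).mp h
  have hfactor : (a * x + C) ^ 2 = a ^ 2 * (x + C / a) ^ 2 := by
    field_simp
  rw [hfactor] at hsq
  exact le_of_mul_le_mul_left hsq (by positivity)

section QuadraticInequality

variable {u c x : ℝ}

lemma abs_sub_le_sqrt_of_sq_add_le (h : (x + c) ^ 2 ≤ 2 * u * x) :
    |x - (u - c)| ≤ √(u ^ 2 - 2 * u * c) :=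
  abs_le_sqrt <| by
    linarith [show (x - (u - c)) ^ 2 = (x + c) ^ 2 - 2 * u * x + (u ^ 2 - 2 * u * c) by ring]

lemma two_mul_le_of_sq_add_le (hu : 0 < u) (h : (x + c) ^ 2 ≤ 2 * u * x) : 2 * c ≤ u := by
  have hdisc : 0 ≤ u * (u - 2 * c) := by
    nlinarith [sq_nonneg (x - (u - c))]
  nlinarith [(mul_nonneg_iff_of_pos_left hu).mp hdisc]

lemma sqrt_sq_sub_two_mul_le (hcu : c ≤ u) : √(u ^ 2 - 2 * u * c) ≤ u - c :=
  (sqrt_le_left (by linarith)).mpr (by nlinarith [sq_nonneg c])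

theorem bounds_of_sq_add_le (hu : 0 < u) (hc : 0 ≤ c) (hx : 0 ≤ x)
    (h : (x + c) ^ 2 ≤ 2 * u * x) :
    u - c - √(u ^ 2 - 2 * u * c) ≤ x ∧ x ≤ √(6 * u ^ 2 - 8 * u * c) := by
  have hdist := abs_le.mp (abs_sub_le_sqrt_of_sq_add_le h)
  have hcu : 2 * c ≤ u := two_mul_le_of_sq_add_le hu h
  have hroot : √(u ^ 2 - 2 * u * c) ≤ u - c := sqrt_sq_sub_two_mul_le (by linarith)
  refine ⟨by linarith [hdist.1], le_sqrt_of_sq_le ?_⟩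
  have hx_le : x ≤ 2 * (u - c) := by linarith [hdist.2]
  calc x ^ 2 ≤ (2 * (u - c)) ^ 2 := pow_le_pow_left₀ hx hx_le 2
    _ ≤ 6 * u ^ 2 - 8 * u * c := by nlinarith

end QuadraticInequality

end Real

theorem stmt12_general (M : ℕ) (hM : 1 ≤ M)
    (ρ : ℝ)
    (hρ0 : 0 < ρ) (hρ1 : ρ < 1)
    (L C : ℝ)
    (hL0 : 0 < L)
    (hC0 : 0 ≤ C)
    (N : ℝ) (hN : 0 ≤ N)
    (h : 2 * M * ρ * (1 - ρ) * N + C ≤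
      Real.sqrt (32 * M * ρ ^ 2 * (1 - ρ) ^ 2 * N * L)) :
    (4 / M) * L - C / (2 * M * ρ * (1 - ρ)) -
        Real.sqrt ((16 / M ^ 2) * L ^ 2 - 4 * C * L / (M ^ 2 * ρ * (1 - ρ))) ≤ N ∧
      N ≤ Real.sqrt ((96 / M ^ 2) * L ^ 2 - 16 * C * L / (M ^ 2 * ρ * (1 - ρ))) := by
  have hMpos : (0 : ℝ) < M := by exact_mod_cast hM
  have h1ρ : 0 < 1 - ρ := by linarith
  have hquad : (N + C / (2 * M * ρ * (1 - ρ))) ^ 2 ≤ 2 * (4 / M * L) * N := by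
    refine Real.sq_add_div_le_of_le_sqrt (by positivity) hC0 hN (by positivity) ?_
    convert h using 2
    field_simp
    ring
  have hbounds := Real.bounds_of_sq_add_le (by positivity) (by positivity) hN hquad
  have hlower_disc : (4 / M * L) ^ 2 - 2 * (4 / M * L) * (C / (2 * M * ρ * (1 - ρ))) =
      (16 / M ^ 2) * L ^ 2 - 4 * C * L / (M ^ 2 * ρ * (1 - ρ)) := by
    field_simp
    ring
  have hupper_disc : 6 * (4 / M * L) ^ 2 - 8 * (4 / M * L) * (C / (2 * M * ρ * (1 - ρ))) =
      (96 / M ^ 2) * L ^ 2 - 16 * C * L / (M ^ 2 * ρ * (1 - ρ)) := by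
    field_simp
    ring
  rwa [hlower_disc, hupper_disc] at hbounds

theorem stmt12 (M d : ℕ) (hM : 1 ≤ M) (hd : 1 ≤ d)
    (ρ δ σ lam α rl T : ℝ)
    (hρ0 : 0 < ρ) (hρ1 : ρ < 1) (hδ0 : 0 < δ) (hδ1 : δ < 1)
    (hσ : 0 ≤ σ) (hlam : 0 < lam) (hα0 : 0 < α) (hα1 : α ≤ 1)
    (hrl : 0 < rl) (hT : 0 ≤ T)
    (L β₀ C : ℝ)
    (hL : L = Real.log (d / δ)) (hL0 : 0 < L)
    (hβ₀ : β₀ = σ * Real.sqrt (2 * Real.log (1 / δ)) + Real.sqrt lam)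
    (hC : C = (2 * β₀ / (α * rl)) ^ 2 - (lam + M * T))
    (hC0 : 0 ≤ C)
    (N : ℝ) (hN : 0 ≤ N)
    (h : 2 * M * ρ * (1 - ρ) * N + C ≤
      Real.sqrt (32 * M * ρ ^ 2 * (1 - ρ) ^ 2 * N * L)) :
    (4 / M) * L - C / (2 * M * ρ * (1 - ρ)) -
        Real.sqrt ((16 / M ^ 2) * L ^ 2 - 4 * C * L / (M ^ 2 * ρ * (1 - ρ))) ≤ N ∧
      N ≤ Real.sqrt ((96 / M ^ 2) * L ^ 2 - 16 * C * L / (M ^ 2 * ρ * (1 - ρ))) :=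
  stmt12_general M hM ρ hρ0 hρ1 L C hL0 hC0 N hN h
end
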